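/- Generalized enhanced advisory bound: For any subspace D ⊆ F_q^n, #Supp(D) ≥ max{#I' : I' ⊆ {1,...,n} and I' has the μ-property with respect to m(D)}, where m(D) = {m(c) : c ∈ D \ {0}}. -/

import Mathlib

variable {F : Type*} [Field F] [Fintype F] {n : ℕ}

/-- The span of the first `i` basis vectors `w_1, ..., w_i` (1-based). -/
def spanPrefix (w : Module.Basis (Fin n) F (Fin n → F)) (i : ℕ) : Submodule F (Fin n → F) :=
  Submodule.span F (⇑w '' {k : Fin n | (k : ℕ) < i})

/-- The standard dot product on `F^n`. -/
def dotP (u v : Fin n → F) : F := ∑ i, u i * v i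

/-- `ρ` is the function `ρ̄_W`: `ρ 0 = 0` and for nonzero `c`, `ρ c = l`
(1-based, written as `k+1` for `k : Fin n`) iff
`c ∈ Span{w_1,...,w_l} \ Span{w_1,...,w_{l-1}}`. -/
def IsRho (w : Module.Basis (Fin n) F (Fin n → F)) (ρ : (Fin n → F) → ℕ) : Prop :=
  ρ 0 = 0 ∧ ∀ c : Fin n → F, c ≠ 0 → ∃ k : Fin n,
    ρ c = (k : ℕ) + 1 ∧ c ∈ spanPrefix w ((k : ℕ) + 1) ∧ c ∉ spanPrefix w (k : ℕ)

/-- `m` is the function `m(c) = min{l : c · w_l ≠ 0}` (1-based). -/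
def IsM (w : Module.Basis (Fin n) F (Fin n → F)) (m : (Fin n → F) → ℕ) : Prop :=
  ∀ c : Fin n → F, c ≠ 0 → ∃ k : Fin n,
    m c = (k : ℕ) + 1 ∧ dotP c (w k) ≠ 0 ∧ ∀ k' : Fin n, k' < k → dotP c (w k') = 0

/-- Hamming weight. -/
noncomputable def wH (c : Fin n → F) : ℕ := Set.ncard {i : Fin n | c i ≠ 0}

/-- Support of a subspace. -/
def suppD (D : Submodule F (Fin n → F)) : Set (Fin n) := {i : Fin n | ∃ c ∈ D, c i ≠ 0}

/-- `I'` has the μ-property with respect to a set `L ⊆ {1,...,n}`. -/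
def MuPropertySet (u v : Module.Basis (Fin n) F (Fin n → F)) (ρ : (Fin n → F) → ℕ)
    (I' : Finset (Fin n)) (L : Set ℕ) : Prop :=
  ∀ i ∈ I', ∃ j : Fin n,
    (∀ i' ∈ I', i' < i → ρ (u i' * v j) < ρ (u i * v j)) ∧
    ρ (u i * v j) ∈ L

/-!
For each `i ∈ I'` pick the witness `j i` and a nonzero `c i ∈ D` with
`m (c i) = ρ̄_W (u_i ∗ v_{j i})`. If `ρ̄_W x < m c`, then `x` lies in the span of the `w_l`
with `l < m c`, all orthogonal to `c`, so `⟨c, x⟩ = 0`; if `ρ̄_W x = m c`, then `⟨c, x⟩ ≠ 0`.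
By the OWB condition the pairing `⟨u_i, c k ∗ v_{j k}⟩ = ⟨c k, u_i ∗ v_{j k}⟩` is therefore
triangular in `(i, k)` with nonzero diagonal, so the `#I'` vectors `c k ∗ v_{j k}` are linearly
independent; they are supported in `Supp(D)`.
-/

theorem linearIndependent_of_triangular {R M ι : Type*} [CommRing R] [NoZeroDivisors R]
    [AddCommGroup M] [Module R M] [LinearOrder ι] {ψ : ι → M} (φ : ι → M →ₗ[R] R)
    (hdiag : ∀ i, φ i (ψ i) ≠ 0) (hlt : ∀ i k, i < k → φ i (ψ k) = 0) :
    LinearIndependent R ψ := by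
  classical
  rw [linearIndependent_iff']
  by_contra! ⟨s, g, hsum, hne⟩
  set t := s.filter fun i => g i ≠ 0
  have ht : t.Nonempty := by
    obtain ⟨i, hi, hgi⟩ := hne
    exact ⟨i, Finset.mem_filter.2 ⟨hi, hgi⟩⟩
  obtain ⟨hi₀s, hgi₀⟩ := Finset.mem_filter.1 (t.min'_mem ht)
  have hφ := congrArg (φ (t.min' ht)) hsum
  rw [map_sum, map_zero, Finset.sum_eq_single_of_mem _ hi₀s] at hφ
  · exact mul_ne_zero hgi₀ (hdiag _) (by simpa using hφ)
  intro i hi hi₀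
  by_cases hgi : g i = 0
  · simp [hgi]
  have hle := t.min'_le i (Finset.mem_filter.2 ⟨hi, hgi⟩)
  simp [hlt _ _ (lt_of_le_of_ne hle (Ne.symm hi₀))]

theorem LinearIndependent.fintype_card_le_ncard_of_support_subset {K ι κ : Type*} [Field K]
    [Fintype ι] [Finite κ] {ψ : ι → κ → K} (hψ : LinearIndependent K ψ) {S : Set κ}
    (hS : ∀ i, Function.support (ψ i) ⊆ S) : Fintype.card ι ≤ S.ncard := by
  classical
  have := Fintype.ofFinite κ
  have hres : LinearIndependent K (LinearMap.funLeft K K ((↑) : S → κ) ∘ ψ) := by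
    refine hψ.map (Submodule.disjoint_def.2 fun x hx hker => ?_)
    have hxS : x ∈ Submodule.pi Sᶜ fun _ => (⊥ : Submodule K K) := by
      refine Submodule.span_le.2 ?_ hx
      rintro _ ⟨i, rfl⟩
      exact Submodule.mem_pi.2 fun l hl =>
        (Submodule.mem_bot K).2 (Function.notMem_support.1 fun h => hl (hS i h))
    funext l
    by_cases hl : l ∈ S
    · exact congrFun hker ⟨l, hl⟩
    · exact (Submodule.mem_bot K).1 (Submodule.mem_pi.1 hxS l hl)
  simpa [Set.ncard_eq_toFinset_card'] using hres.fintype_card_le_finrank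

theorem dotProduct_mul_left_comm {R ι : Type*} [CommSemiring R] [Fintype ι] (a b c : ι → R) :
    a ⬝ᵥ (b * c) = b ⬝ᵥ (a * c) := by
  simp only [dotProduct, Pi.mul_apply, mul_left_comm]

section Filtration

variable {K : Type*} [Field K] {w : Module.Basis (Fin n) K (Fin n → K)}

theorem dotP_eq_dotProduct (c x : Fin n → K) : dotP c x = c ⬝ᵥ x := rfl

theorem spanPrefix_mono : Monotone (spanPrefix w) := fun _ _ hab =>
  Submodule.span_mono (Set.image_mono fun _ hk => lt_of_lt_of_le hk hab)

theorem spanPrefix_succ (k : Fin n) : spanPrefix w (k + 1) = spanPrefix w k ⊔ K ∙ w k := by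
  have : {l : Fin n | (l : ℕ) < k + 1} = {l : Fin n | (l : ℕ) < k} ∪ {k} := by
    ext l
    simp [le_iff_lt_or_eq, Fin.val_inj, or_comm]
  rw [spanPrefix, spanPrefix, this, Set.image_union, Submodule.span_union, Set.image_singleton]

theorem dotP_eq_zero_of_mem_spanPrefix {c x : Fin n → K} {a : ℕ}
    (hc : ∀ l : Fin n, (l : ℕ) < a → dotP c (w l) = 0) (hx : x ∈ spanPrefix w a) :
    dotP c x = 0 := by
  have : spanPrefix w a ≤ LinearMap.ker (dotProductBilin K K c) :=
    Submodule.span_le.2 (by rintro _ ⟨l, hl, rfl⟩; exact LinearMap.mem_ker.2 (hc l hl))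
  exact this hx

variable {ρ m : (Fin n → K) → ℕ}

theorem IsRho.mem_spanPrefix (hρ : IsRho w ρ) (x : Fin n → K) : x ∈ spanPrefix w (ρ x) := by
  by_cases hx : x = 0
  · exact hx ▸ zero_mem _
  obtain ⟨k, hk, hxk, -⟩ := hρ.2 x hx
  rwa [hk]

theorem IsM.dotP_eq_zero_of_lt (hm : IsM w m) (hρ : IsRho w ρ) {c x : Fin n → K} (hc : c ≠ 0)
    (h : ρ x < m c) : dotP c x = 0 := by
  obtain ⟨k, hmk, -, hk⟩ := hm c hc
  exact dotP_eq_zero_of_mem_spanPrefix (a := k) (fun l hl => hk l hl)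
    (spanPrefix_mono (by omega) (hρ.mem_spanPrefix x))

theorem IsM.dotP_ne_zero_of_eq (hm : IsM w m) (hρ : IsRho w ρ) {c x : Fin n → K} (hc : c ≠ 0)
    (h : ρ x = m c) : dotP c x ≠ 0 := by
  obtain ⟨k, hmk, hck, hk⟩ := hm c hc
  have hx : x ≠ 0 := by
    rintro rfl
    rw [hρ.1] at h
    omega
  obtain ⟨kx, hρx, hxk, hxk'⟩ := hρ.2 x hx
  obtain rfl : kx = k := Fin.ext (by omega)
  rw [spanPrefix_succ, Submodule.mem_sup] at hxk
  obtain ⟨y, hy, z, hz, rfl⟩ := hxk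
  obtain ⟨a, rfl⟩ := Submodule.mem_span_singleton.1 hz
  have ha : a ≠ 0 := by
    rintro rfl
    exact hxk' (by simpa using hy)
  rw [dotP_eq_dotProduct, dotProduct_add, dotProduct_smul, ← dotP_eq_dotProduct,
    dotP_eq_zero_of_mem_spanPrefix (fun l hl => hk l hl) hy, zero_add, smul_eq_mul]
  exact mul_ne_zero ha hck

end Filtration

/-- generalized enhanced advisory bound: for any subspace `D`,
every `I'` with the μ-property with respect to `m(D)` satisfies
`#I' ≤ #Supp(D)`. -/
theorem stmt_10 (u v w : Module.Basis (Fin n) F (Fin n → F))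
    (ρ m : (Fin n → F) → ℕ) (hρ : IsRho w ρ) (hm : IsM w m)
    (D : Submodule F (Fin n → F)) (I' : Finset (Fin n))
    (hI : MuPropertySet u v ρ I'
      {l : ℕ | ∃ c : Fin n → F, c ∈ D ∧ c ≠ 0 ∧ m c = l}) :
    I'.card ≤ (suppD D).ncard := by
  choose j hj c hcD hc0 hcm using fun i : I' => hI i i.2
  have hpair : ∀ i k : I', dotProductBilin F F (u i) (c k * v (j k)) =
      dotP (c k) (u i * v (j k)) := fun i k => dotProduct_mul_left_comm (u i) (c k) (v (j k))
  have hψ : LinearIndependent F fun k : I' => c k * v (j k) := by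
    refine linearIndependent_of_triangular (fun i => dotProductBilin F F (u i))
      (fun i => ?_) (fun i k hik => ?_) <;> rw [hpair]
    · exact hm.dotP_ne_zero_of_eq hρ (hc0 i) (hcm i).symm
    · exact hm.dotP_eq_zero_of_lt hρ (hc0 k) (hcm k ▸ hj k i i.2 hik)
  calc I'.card = Fintype.card I' := (Fintype.card_coe I').symm
    _ ≤ (suppD D).ncard := hψ.fintype_card_le_ncard_of_support_subset fun k =>
      (Function.support_mul_subset_left _ _).trans fun l hl => ⟨c k, hcD k, hl⟩
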